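/- Let f : ℝ^d → ℝ be differentiable with L-Lipschitz gradient (L > 0) and bounded below by f*. Let B ≥ 0, let T ≥ 1, and consider the biased gradient descent iteration W_{t+1} = W_t − η·(∇f(W_t) + b_t) with step size η = 1/L, where the bias vectors satisfy ‖b_t‖ ≤ B for all t. Then the average squared gradient norm satisfies (1/T)·Σ_{t=0}^{T−1} ‖∇f(W_t)‖² ≤ 2L·(f(W_0) − f*)/T + B². In particular, the residual error is proportional to the squared bias bound B², and the optimization error term decays at rate O(1/T). -/

import Mathlib

/-!
Along the segment from `x` to `y`, the function
`t ↦ f (x + t • (y - x)) - t * ⟪∇f x, y - x⟫ - L / 2 * t ^ 2 * ‖y - x‖ ^ 2` is antitone, since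
the Lipschitz bound on the gradient makes its derivative nonpositive; this is the descent lemma.
With step size `1 / L` it gives `‖∇f x‖² ≤ 2L (f x - f x⁺) + ‖b‖²` for one biased step
`x⁺ = x - (1 / L) • (∇f x + b)`, and summing over `T` steps telescopes the function values,
which `f ≥ fstar` bounds.
-/

open Finset InnerProductSpace

section Descent

variable {F : Type*} [NormedAddCommGroup F] [InnerProductSpace ℝ F] [CompleteSpace F]
  {f : F → ℝ} {L : ℝ}

theorem le_add_inner_gradient_add_sq_of_lipschitz_gradient (hdiff : Differentiable ℝ f)
    (hlip : ∀ x y, ‖gradient f x - gradient f y‖ ≤ L * ‖x - y‖) (x y : F) :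
    f y ≤ f x + ⟪gradient f x, y - x⟫_ℝ + L / 2 * ‖y - x‖ ^ 2 := by
  set v := y - x
  let φ : ℝ → ℝ := fun t ↦ f (x + t • v) - t * ⟪gradient f x, v⟫_ℝ - L / 2 * t ^ 2 * ‖v‖ ^ 2
  have hφ' : ∀ t,
      HasDerivAt φ (⟪gradient f (x + t • v) - gradient f x, v⟫_ℝ - L * t * ‖v‖ ^ 2) t := by
    intro t
    have hline : HasDerivAt (fun s : ℝ ↦ x + s • v) v t := by
      simpa using ((hasDerivAt_id t).smul_const v).const_add x
    have hf := (hdiff (x + t • v)).hasGradientAt.hasFDerivAt.comp_hasDerivAt t hline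
    refine ((hf.sub ((hasDerivAt_id t).mul_const ⟪gradient f x, v⟫_ℝ)).sub
      (((hasDerivAt_pow 2 t).const_mul (L / 2)).mul_const (‖v‖ ^ 2))).congr_deriv ?_
    simp only [toDual_apply_apply, inner_sub_left]
    push_cast
    ring
  have hφ'_nonpos : ∀ t ∈ interior (Set.Ici (0 : ℝ)),
      ⟪gradient f (x + t • v) - gradient f x, v⟫_ℝ - L * t * ‖v‖ ^ 2 ≤ 0 := by
    intro t ht
    rw [interior_Ici, Set.mem_Ioi] at ht
    rw [sub_nonpos]
    have hgrad : ‖gradient f (x + t • v) - gradient f x‖ ≤ L * t * ‖v‖ := by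
      simpa [norm_smul, abs_of_pos ht, mul_assoc] using hlip (x + t • v) x
    calc ⟪gradient f (x + t • v) - gradient f x, v⟫_ℝ
        ≤ ‖gradient f (x + t • v) - gradient f x‖ * ‖v‖ := real_inner_le_norm _ _
      _ ≤ L * t * ‖v‖ * ‖v‖ := by gcongr
      _ = L * t * ‖v‖ ^ 2 := by ring
  have hanti : AntitoneOn φ (Set.Ici 0) :=
    antitoneOn_of_hasDerivWithinAt_nonpos (convex_Ici 0)
      (fun t _ ↦ (hφ' t).continuousAt.continuousWithinAt)
      (fun t _ ↦ (hφ' t).hasDerivWithinAt) hφ'_nonpos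
  have h01 : φ 1 ≤ φ 0 := hanti (by simp) (by simp) zero_le_one
  simp only [φ, v, one_smul, add_sub_cancel, zero_smul, add_zero] at h01
  linarith

theorem sq_norm_gradient_le_of_biased_step (hL : 0 < L) (hdiff : Differentiable ℝ f)
    (hlip : ∀ x y, ‖gradient f x - gradient f y‖ ≤ L * ‖x - y‖) (x b : F) :
    ‖gradient f x‖ ^ 2 ≤ 2 * L * (f x - f (x - (1 / L) • (gradient f x + b))) + ‖b‖ ^ 2 := by
  set g := gradient f x
  have hdescent := le_add_inner_gradient_add_sq_of_lipschitz_gradient hdiff hlip x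
    (x - (1 / L) • (g + b))
  -- `‖b‖² = ‖(g + b) - g‖²` expands to the combination of inner products the step produces.
  have hb : ‖b‖ ^ 2 = ‖g + b‖ ^ 2 - 2 * ⟪g + b, g⟫_ℝ + ‖g‖ ^ 2 := by
    rw [← norm_sub_sq_real, add_sub_cancel_left]
  rw [sub_sub_cancel_left, inner_neg_right, real_inner_smul_right, norm_neg, norm_smul,
    Real.norm_of_nonneg (by positivity), real_inner_comm] at hdescent
  rw [hb]
  field_simp at hdescent ⊢
  nlinarith

end Descent

theorem sum_le_mul_sub_add_of_le_mul_sub_succ_add {a u : ℕ → ℝ} {c e : ℝ}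
    (h : ∀ t, a t ≤ c * (u t - u (t + 1)) + e) (T : ℕ) :
    ∑ t ∈ range T, a t ≤ c * (u 0 - u T) + T * e := by
  calc ∑ t ∈ range T, a t ≤ ∑ t ∈ range T, (c * (u t - u (t + 1)) + e) :=
        sum_le_sum fun t _ ↦ h t
    _ = c * (u 0 - u T) + T * e := by
      rw [sum_add_distrib, ← mul_sum, sum_range_sub', sum_const, card_range, nsmul_eq_mul]

open Finset in
theorem biased_gradient_descent_convergence_general
    (d : ℕ) (f : EuclideanSpace ℝ (Fin d) → ℝ)
    (L : ℝ) (hL : 0 < L)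
    (hdiff : Differentiable ℝ f)
    (hlip : ∀ x y, ‖gradient f x - gradient f y‖ ≤ L * ‖x - y‖)
    (fstar : ℝ) (hbound : ∀ x, fstar ≤ f x)
    (B : ℝ)
    (T : ℕ)
    (W b : ℕ → EuclideanSpace ℝ (Fin d))
    (hbias : ∀ t, ‖b t‖ ≤ B)
    (hiter : ∀ t, W (t + 1) = W t - (1 / L) • (gradient f (W t) + b t)) :
    (1 / T : ℝ) * ∑ t ∈ Finset.range T, ‖gradient f (W t)‖ ^ 2
      ≤ 2 * L * (f (W 0) - fstar) / T + B ^ 2 := by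
  have hstep : ∀ t, ‖gradient f (W t)‖ ^ 2 ≤ 2 * L * (f (W t) - f (W (t + 1))) + B ^ 2 := by
    intro t
    rw [hiter]
    refine (sq_norm_gradient_le_of_biased_step hL hdiff hlip (W t) (b t)).trans ?_
    gcongr
    exact hbias t
  have hsum := sum_le_mul_sub_add_of_le_mul_sub_succ_add hstep T
  rcases T.eq_zero_or_pos with rfl | hT
  · simp [sq_nonneg]
  have hT' : (0 : ℝ) < T := by exact_mod_cast hT
  rw [one_div_mul_eq_div, div_le_iff₀ hT', add_mul, div_mul_cancel₀ _ hT'.ne']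
  nlinarith [hbound (W T)]

open Finset in
/-- Convergence of biased gradient descent: if `f : ℝ^d → ℝ` is differentiable
with `L`-Lipschitz gradient and bounded below by `fstar`, and the iterates
follow `W (t+1) = W t − (1/L) • (∇f (W t) + b t)` with bias `‖b t‖ ≤ B`,
then the average squared gradient norm over `T` rounds satisfies
`(1/T) ∑_{t<T} ‖∇f (W t)‖² ≤ 2L (f (W 0) − fstar) / T + B²`. -/
theorem biased_gradient_descent_convergence
    (d : ℕ) (f : EuclideanSpace ℝ (Fin d) → ℝ)
    (L : ℝ) (hL : 0 < L)
    (hdiff : Differentiable ℝ f)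
    (hlip : ∀ x y, ‖gradient f x - gradient f y‖ ≤ L * ‖x - y‖)
    (fstar : ℝ) (hbound : ∀ x, fstar ≤ f x)
    (B : ℝ) (hB : 0 ≤ B)
    (T : ℕ) (hT : 1 ≤ T)
    (W b : ℕ → EuclideanSpace ℝ (Fin d))
    (hbias : ∀ t, ‖b t‖ ≤ B)
    (hiter : ∀ t, W (t + 1) = W t - (1 / L) • (gradient f (W t) + b t)) :
    (1 / T : ℝ) * ∑ t ∈ Finset.range T, ‖gradient f (W t)‖ ^ 2
      ≤ 2 * L * (f (W 0) - fstar) / T + B ^ 2 :=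
  biased_gradient_descent_convergence_general d f L hL hdiff hlip fstar hbound B T W b hbias hiter
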